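/- arXiv:2310.10382 — 4 statements merged into one kernel-verified Lean document; each statement's English description precedes it below -/
import Mathlib

section
/- Let R > 0 and suppose R0 > 0 satisfies R0^2 - R ≥ 2R0 and R0 ≥ 2. Then for every sequence ω = (c_0, c_1, ...) with all c_n in D(0,R) and every z with |z| > R0, the limit g_ω(z) = lim_{n→∞} 2^{-n} ln|f^n_ω(z)| exists. -/
open Metric Complex Filter

/-- The quadratic polynomial `f_c(z) = z^2 + c`. -/
noncomputable def fc (c z : ℂ) : ℂ := z ^ 2 + c

/-- The non-autonomous orbit: `orbitC ω z n = f_{ω(n-1)} ∘ ... ∘ f_{ω 0} (z)`. -/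
noncomputable def orbitC (ω : ℕ → ℂ) (z : ℂ) : ℕ → ℂ
  | 0 => z
  | n + 1 => fc (ω n) (orbitC ω z n)

/- Once `|z| > R0`, the orbit stays outside the disc of radius `R0`, where `f_c(w)` is within the
factor `1 ± R / R0^2` of `w^2`. Hence `log |z_{n+1}| - 2 log |z_n|` is bounded, and the differences
of consecutive terms of `2^{-n} log |z_n|` decay geometrically. -/

lemma cauchySeq_div_pow_of_abs_sub_mul_le {a : ℕ → ℝ} {b C : ℝ} (hb : 1 < b)
    (h : ∀ n, |a (n + 1) - b * a n| ≤ C) : CauchySeq fun n => a n / b ^ n := by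
  have hb0 : 0 < b := one_pos.trans hb
  refine cauchySeq_of_le_geometric b⁻¹ (C / b) (inv_lt_one_of_one_lt₀ hb) fun n => ?_
  have hdiff : a n / b ^ n - a (n + 1) / b ^ (n + 1) = -(a (n + 1) - b * a n) / b ^ (n + 1) := by
    field_simp
    ring
  rw [Real.dist_eq, hdiff, abs_div, abs_neg, abs_of_pos (pow_pos hb0 _)]
  calc |a (n + 1) - b * a n| / b ^ (n + 1) ≤ C / b ^ (n + 1) := by gcongr; exact h n
    _ = C / b * b⁻¹ ^ n := by rw [pow_succ, inv_pow]; field_simp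

lemma abs_log_le_neg_log_one_sub {x ε : ℝ} (hε : ε < 1) (hx : |x - 1| ≤ ε) :
    |Real.log x| ≤ -Real.log (1 - ε) := by
  obtain ⟨hlow, hhigh⟩ := abs_le.1 hx
  have hε0 : 0 < 1 - ε := by linarith
  have hlog_one_sub : Real.log (1 - ε) ≤ -ε := by linarith [Real.log_le_sub_one_of_pos hε0]
  have hlog_x : Real.log x ≤ x - 1 := Real.log_le_sub_one_of_pos (by linarith)
  have hlog_ge : Real.log (1 - ε) ≤ Real.log x := Real.log_le_log hε0 (by linarith)
  exact abs_le.2 ⟨by linarith, by linarith⟩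

lemma abs_norm_fc_sub_norm_sq_le (c w : ℂ) : |‖fc c w‖ - ‖w‖ ^ 2| ≤ ‖c‖ := by
  have h := abs_norm_sub_norm_le (w ^ 2 + c) (w ^ 2)
  rwa [add_sub_cancel_left, norm_pow] at h

lemma abs_log_norm_fc_sub_two_mul_log_le {c w : ℂ} {ε : ℝ} (hε : ε < 1) (hw : w ≠ 0)
    (hc : ‖c‖ ≤ ε * ‖w‖ ^ 2) :
    |Real.log ‖fc c w‖ - 2 * Real.log ‖w‖| ≤ -Real.log (1 - ε) := by
  have hw2 : 0 < ‖w‖ ^ 2 := by positivity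
  have hratio : |‖fc c w‖ / ‖w‖ ^ 2 - 1| ≤ ε := by
    rw [div_sub_one hw2.ne', abs_div, abs_of_pos hw2, div_le_iff₀ hw2]
    exact (abs_norm_fc_sub_norm_sq_le c w).trans hc
  have hfc : ‖fc c w‖ ≠ 0 := by
    intro h0
    rw [h0, zero_div, zero_sub, abs_neg, abs_one] at hratio
    linarith
  have hlog : Real.log ‖fc c w‖ - 2 * Real.log ‖w‖ = Real.log (‖fc c w‖ / ‖w‖ ^ 2) := by
    rw [Real.log_div hfc hw2.ne', Real.log_pow, Nat.cast_ofNat]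
  rw [hlog]
  exact abs_log_le_neg_log_one_sub hε hratio

lemma lt_norm_orbitC {ω : ℕ → ℂ} {z : ℂ} {R R0 : ℝ} (hR0 : 0 ≤ R0) (h : R ≤ R0 ^ 2 - R0)
    (hω : ∀ n, ‖ω n‖ ≤ R) (hz : R0 < ‖z‖) (n : ℕ) : R0 < ‖orbitC ω z n‖ := by
  induction n with
  | zero => exact hz
  | succ n ih =>
    have hstep := (abs_le.1 (abs_norm_fc_sub_norm_sq_le (ω n) (orbitC ω z n))).1
    have hsq : R0 ^ 2 < ‖orbitC ω z n‖ ^ 2 := by gcongr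
    show R0 < ‖fc (ω n) (orbitC ω z n)‖
    linarith [hω n]

theorem stmt2_general (R R0 : ℝ) (hR0 : 0 < R0)
    (h1 : R0 ^ 2 - R ≥ 2 * R0)
    (ω : ℕ → ℂ) (hω : ∀ n, ‖ω n‖ < R)
    (z : ℂ) (hz : ‖z‖ > R0) :
    ∃ g : ℝ, Tendsto (fun n : ℕ => Real.log ‖orbitC ω z n‖ / 2 ^ n)
      atTop (nhds g) := by
  have hR0sq : 0 < R0 ^ 2 := by positivity
  set ε := R / R0 ^ 2 with hε_def
  have hε0 : 0 ≤ ε := div_nonneg ((norm_nonneg _).trans (hω 0).le) hR0sq.le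
  have hε : ε < 1 := (div_lt_one hR0sq).2 (by nlinarith)
  have hfar := lt_norm_orbitC hR0.le (by linarith) (fun n => (hω n).le) hz
  have hstep (n : ℕ) :
      |Real.log ‖orbitC ω z (n + 1)‖ - 2 * Real.log ‖orbitC ω z n‖| ≤ -Real.log (1 - ε) := by
    refine abs_log_norm_fc_sub_two_mul_log_le hε (norm_pos_iff.1 (hR0.trans (hfar n))) ?_
    calc ‖ω n‖ ≤ R := (hω n).le
      _ = ε * R0 ^ 2 := by rw [hε_def, div_mul_cancel₀ R hR0sq.ne']
      _ ≤ ε * ‖orbitC ω z n‖ ^ 2 := by gcongr; exact (hfar n).le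
  exact cauchySeq_tendsto_of_complete (cauchySeq_div_pow_of_abs_sub_mul_le one_lt_two hstep)

/-- Let `R > 0` and suppose `R0 > 0` satisfies `R0^2 - R ≥ 2 R0` and `R0 ≥ 2`. Then for
every parameter sequence `ω` with all entries in `D(0,R)` and every `z` with `|z| > R0`,
the limit `g_ω(z) = lim_{n→∞} 2^{-n} ln |f^n_ω(z)|` exists. -/
theorem stmt2 (R R0 : ℝ) (hR : 0 < R) (hR0 : 0 < R0)
    (h1 : R0 ^ 2 - R ≥ 2 * R0) (h2 : R0 ≥ 2)
    (ω : ℕ → ℂ) (hω : ∀ n, ‖ω n‖ < R)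
    (z : ℂ) (hz : ‖z‖ > R0) :
    ∃ g : ℝ, Tendsto (fun n : ℕ => Real.log ‖orbitC ω z n‖ / 2 ^ n)
      atTop (nhds g) :=
  stmt2_general R R0 hR0 h1 ω hω z hz
end

section
/- With ℙ_R the infinite product of uniform distributions on D(0,R), the global Green function 𝐠_R(0) = ∫ g_ω(0) dℙ_R(ω) satisfies lim_{R→∞} 𝐠_R(0)/ln R = 1/2. -/
open Metric Complex Filter MeasureTheory

-- The Green function at the critical point: `g_ω(0) = lim_n 2^{-n} ln |f^n_ω(0)|` when `0`
-- escapes to infinity, and `0` otherwise.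
open Classical in
noncomputable def green0 (ω : ℕ → ℂ) : ℝ :=
  if Tendsto (fun n => ‖orbitC ω 0 n‖) atTop atTop then
    limUnder atTop (fun n : ℕ => Real.log (‖orbitC ω 0 n‖) / 2 ^ n)
  else 0

/-- `P` is the infinite product of uniform distributions on the disk `D(0,R)`: it is a
probability measure on `D(0,R)^ℕ ⊆ ℂ^ℕ` whose finite-dimensional cylinder marginals are
products of normalized Lebesgue measures on `D(0,R)`. -/
def IsProductOfUniform (P : Measure (ℕ → ℂ)) (R : ℝ) : Prop :=
  IsProbabilityMeasure P ∧
    ∀ (s : Finset ℕ) (B : ℕ → Set ℂ), (∀ i, MeasurableSet (B i)) →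
      P {ω | ∀ i ∈ s, ω i ∈ B i} =
        ∏ i ∈ s, (volume (ball (0 : ℂ) R))⁻¹ * volume (B i ∩ ball (0 : ℂ) R)


/-! When the coefficients are bounded by `R` and `|z|² ≥ 2R`, one step `z ↦ z² + c` multiplies
`|z|²` by a factor in `[1/2, 2]`, so along an escaping orbit `log |z_n| / 2ⁿ` is Cauchy. Comparing
with the recursion `w ↦ w²` gives `g_ω(0) ≤ log (2R) / 2` for every `ω`, and
`g_ω(0) ≥ log (|c₀| / 2) / 2` as soon as `|c₀|` is large; the event `|c₀| > δR` has probability at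
least `1 - δ²`. Hence `(1 - δ²)/2 + o(1) ≤ 𝐠_R(0) / log R ≤ 1/2 + o(1)`, and `δ = √ε` concludes. -/

open Topology

section TwoPow

variable {α : Type*} [CommSemiring α] [PartialOrder α] [IsOrderedRing α] {w : ℕ → α}

theorem le_pow_two_pow_of_le_sq (hw : ∀ n, 0 ≤ w n) (h : ∀ n, w (n + 1) ≤ w n ^ 2) (n : ℕ) :
    w n ≤ w 0 ^ 2 ^ n := by
  induction n with
  | zero => simp
  | succ n ih =>
    calc w (n + 1) ≤ w n ^ 2 := h n
      _ ≤ (w 0 ^ 2 ^ n) ^ 2 := pow_le_pow_left₀ (hw n) ih 2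
      _ = w 0 ^ 2 ^ (n + 1) := by rw [← pow_mul, pow_succ]

theorem pow_two_pow_le_of_sq_le (hw : 0 ≤ w 0) (h : ∀ n, w n ^ 2 ≤ w (n + 1)) (n : ℕ) :
    w 0 ^ 2 ^ n ≤ w n := by
  induction n with
  | zero => simp
  | succ n ih =>
    calc w 0 ^ 2 ^ (n + 1) = (w 0 ^ 2 ^ n) ^ 2 := by rw [← pow_mul, pow_succ]
      _ ≤ w n ^ 2 := pow_le_pow_left₀ (by positivity) ih 2
      _ ≤ w (n + 1) := h n

end TwoPow

theorem cauchySeq_div_two_pow {u : ℕ → ℝ} {C : ℝ} (N : ℕ)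
    (h : ∀ n ≥ N, |u (n + 1) - 2 * u n| ≤ C) : CauchySeq fun n ↦ u n / 2 ^ n := by
  rw [← cauchySeq_shift N]
  refine cauchySeq_of_le_geometric_two (C := C / 2 ^ N) fun n ↦ ?_
  have hstep := h (n + N) (Nat.le_add_left N n)
  have hdiff : u (n + N + 1) / 2 ^ (n + N + 1) - u (n + N) / 2 ^ (n + N)
      = (u (n + N + 1) - 2 * u (n + N)) / 2 ^ (n + N + 1) := by
    rw [pow_succ]; field_simp
  rw [Real.dist_eq, abs_sub_comm, add_right_comm n 1 N, hdiff, abs_div,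
    abs_of_pos (by positivity : (0 : ℝ) < 2 ^ (n + N + 1))]
  calc _ ≤ C / 2 ^ (n + N + 1) := by gcongr
    _ = C / 2 ^ N / 2 / 2 ^ n := by rw [pow_succ, pow_add]; field_simp

section Orbit

variable (ω : ℕ → ℂ) (z : ℂ) (n : ℕ)

theorem orbitC_zero_one : orbitC ω 0 1 = ω 0 := by simp [orbitC, fc]

theorem norm_orbitC_succ_le : ‖orbitC ω z (n + 1)‖ ≤ ‖orbitC ω z n‖ ^ 2 + ‖ω n‖ := by
  rw [← norm_pow]
  exact norm_add_le _ _

theorem norm_orbitC_succ_ge : ‖orbitC ω z n‖ ^ 2 - ‖ω n‖ ≤ ‖orbitC ω z (n + 1)‖ := by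
  rw [← norm_pow]
  exact norm_sub_le_norm_add _ _

theorem measurable_orbitC : Measurable fun ω ↦ orbitC ω z n := by
  induction n with
  | zero => exact measurable_const
  | succ n ih => exact (ih.pow_const 2).add (measurable_pi_apply n)

end Orbit

section Escape

variable {ω : ℕ → ℂ} {z : ℂ} {R : ℝ}

theorem abs_log_norm_orbitC_succ_sub_le {n : ℕ} (hωn : ‖ω n‖ ≤ R) (hz : 0 < ‖orbitC ω z n‖)
    (hR : 2 * R ≤ ‖orbitC ω z n‖ ^ 2) :
    |Real.log ‖orbitC ω z (n + 1)‖ - 2 * Real.log ‖orbitC ω z n‖| ≤ Real.log 2 := by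
  have hlo : ‖orbitC ω z n‖ ^ 2 / 2 ≤ ‖orbitC ω z (n + 1)‖ := by
    linarith [norm_orbitC_succ_ge ω z n]
  have hhi : ‖orbitC ω z (n + 1)‖ ≤ 2 * ‖orbitC ω z n‖ ^ 2 := by
    linarith [norm_orbitC_succ_le ω z n, norm_nonneg (ω n)]
  have hpos : 0 < ‖orbitC ω z (n + 1)‖ := (by positivity : (0 : ℝ) < _).trans_le hlo
  have hlog_sq : Real.log (‖orbitC ω z n‖ ^ 2) = 2 * Real.log ‖orbitC ω z n‖ := by
    rw [Real.log_pow]; norm_num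
  rw [abs_le]
  constructor
  · have := Real.log_le_log (by positivity) hlo
    rw [Real.log_div (by positivity) two_ne_zero, hlog_sq] at this
    linarith
  · have := Real.log_le_log hpos hhi
    rw [Real.log_mul two_ne_zero (by positivity), hlog_sq] at this
    linarith

theorem exists_tendsto_log_norm_orbitC_div (hω : ∀ i, ‖ω i‖ ≤ R)
    (hesc : Tendsto (fun n ↦ ‖orbitC ω z n‖) atTop atTop) :
    ∃ L, Tendsto (fun n ↦ Real.log ‖orbitC ω z n‖ / 2 ^ n) atTop (𝓝 L) := by
  have hR : 0 ≤ R := (norm_nonneg _).trans (hω 0)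
  obtain ⟨N, hN⟩ := eventually_atTop.1 (hesc.eventually_ge_atTop (2 * R + 1))
  refine cauchySeq_tendsto_of_complete (cauchySeq_div_two_pow (C := Real.log 2) N fun n hn ↦ ?_)
  have := hN n hn
  exact abs_log_norm_orbitC_succ_sub_le (hω n) (by linarith) (by nlinarith)

theorem le_norm_orbitC_add {m : ℕ} (hω : ∀ i, ‖ω i‖ ≤ R) (h4 : 4 ≤ ‖orbitC ω z m‖)
    (hR : 2 * R ≤ ‖orbitC ω z m‖ ^ 2) (n : ℕ) : ‖orbitC ω z m‖ ≤ ‖orbitC ω z (m + n)‖ := by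
  induction n with
  | zero => rfl
  | succ n ih =>
    have hsq := norm_orbitC_succ_ge ω z (m + n)
    rw [← add_assoc]
    nlinarith [hω (m + n)]

theorem pow_two_pow_le_norm_orbitC_add {m : ℕ} (hω : ∀ i, ‖ω i‖ ≤ R)
    (h4 : 4 ≤ ‖orbitC ω z m‖) (hR : 2 * R ≤ ‖orbitC ω z m‖ ^ 2) (n : ℕ) :
    (‖orbitC ω z m‖ / 2) ^ 2 ^ n ≤ ‖orbitC ω z (m + n)‖ / 2 := by
  refine pow_two_pow_le_of_sq_le (w := fun n ↦ ‖orbitC ω z (m + n)‖ / 2) (by positivity)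
    (fun k ↦ ?_) n
  have hmono := le_norm_orbitC_add hω h4 hR k
  have hsq := norm_orbitC_succ_ge ω z (m + k)
  rw [← add_assoc]
  nlinarith [hω (m + k)]

theorem tendsto_norm_orbitC_atTop {m : ℕ} (hω : ∀ i, ‖ω i‖ ≤ R) (h4 : 4 ≤ ‖orbitC ω z m‖)
    (hR : 2 * R ≤ ‖orbitC ω z m‖ ^ 2) : Tendsto (fun n ↦ ‖orbitC ω z n‖) atTop atTop := by
  rw [← tendsto_add_atTop_iff_nat m]
  have hpow : Tendsto (fun n : ℕ ↦ (‖orbitC ω z m‖ / 2) ^ 2 ^ n) atTop atTop :=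
    (tendsto_pow_atTop_atTop_of_one_lt (by linarith)).comp
      (tendsto_pow_atTop_atTop_of_one_lt (α := ℕ) one_lt_two)
  refine tendsto_atTop_mono (fun n ↦ ?_) hpow
  rw [add_comm]
  linarith [pow_two_pow_le_norm_orbitC_add hω h4 hR n, norm_nonneg (orbitC ω z (m + n))]

end Escape

section Green

variable {ω : ℕ → ℂ} {R : ℝ}

theorem tendsto_green0 (hω : ∀ i, ‖ω i‖ ≤ R)
    (hesc : Tendsto (fun n ↦ ‖orbitC ω 0 n‖) atTop atTop) :
    Tendsto (fun n ↦ Real.log ‖orbitC ω 0 n‖ / 2 ^ n) atTop (𝓝 (green0 ω)) := by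
  obtain ⟨L, hL⟩ := exists_tendsto_log_norm_orbitC_div hω hesc
  rwa [green0, if_pos hesc, hL.limUnder_eq]

theorem green0_nonneg (hω : ∀ i, ‖ω i‖ ≤ R) : 0 ≤ green0 ω := by
  by_cases hesc : Tendsto (fun n ↦ ‖orbitC ω 0 n‖) atTop atTop
  · refine ge_of_tendsto (tendsto_green0 hω hesc) ?_
    filter_upwards [hesc.eventually_ge_atTop 1] with n hn
    exact div_nonneg (Real.log_nonneg hn) (by positivity)
  · rw [green0, if_neg hesc]

theorem norm_orbitC_zero_succ_le (hR : 1 ≤ R) (hω : ∀ i, ‖ω i‖ ≤ R) (n : ℕ) :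
    ‖orbitC ω 0 (n + 1)‖ ≤ (2 * R) ^ 2 ^ n := by
  -- `w 0 = 2R` because the first iterate is `c₀`, and `|z|² + R ≤ 2 max(|z|, R)²` since `R ≥ 1`.
  set w : ℕ → ℝ := fun n ↦ 2 * max ‖orbitC ω 0 (n + 1)‖ R
  have hw0 : w 0 = 2 * R := by simp [w, orbitC_zero_one, hω 0]
  have hstep (k : ℕ) : w (k + 1) ≤ w k ^ 2 := by
    have hsucc := norm_orbitC_succ_le ω 0 (k + 1)
    have hz := le_max_left ‖orbitC ω 0 (k + 1)‖ R
    have hRM := le_max_right ‖orbitC ω 0 (k + 1)‖ R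
    have hM : max ‖orbitC ω 0 (k + 1 + 1)‖ R ≤ 2 * max ‖orbitC ω 0 (k + 1)‖ R ^ 2 :=
      max_le (by nlinarith [hω (k + 1), norm_nonneg (orbitC ω 0 (k + 1))]) (by nlinarith)
    simp only [w]
    nlinarith
  calc ‖orbitC ω 0 (n + 1)‖ ≤ w n := by
        simp only [w]
        linarith [le_max_left ‖orbitC ω 0 (n + 1)‖ R, norm_nonneg (orbitC ω 0 (n + 1))]
    _ ≤ w 0 ^ 2 ^ n :=
        le_pow_two_pow_of_le_sq (fun k ↦ by simp only [w]; positivity) hstep n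
    _ = (2 * R) ^ 2 ^ n := by rw [hw0]

theorem green0_le (hR : 1 ≤ R) (hω : ∀ i, ‖ω i‖ ≤ R) : green0 ω ≤ Real.log (2 * R) / 2 := by
  by_cases hesc : Tendsto (fun n ↦ ‖orbitC ω 0 n‖) atTop atTop
  · refine le_of_tendsto (tendsto_green0 hω hesc) ?_
    filter_upwards [eventually_ge_atTop 1, hesc.eventually_gt_atTop 0] with n hn hpos
    obtain ⟨m, rfl⟩ := Nat.exists_eq_add_of_le' hn
    have hlog := Real.log_le_log hpos (norm_orbitC_zero_succ_le hR hω m)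
    rw [Real.log_pow] at hlog
    push_cast at hlog
    rw [div_le_div_iff₀ (by positivity) two_pos, pow_succ]
    nlinarith
  · rw [green0, if_neg hesc]
    exact div_nonneg (Real.log_nonneg (by linarith)) two_pos.le

theorem log_div_two_le_green0 (hω : ∀ i, ‖ω i‖ ≤ R) (h4 : 4 ≤ ‖ω 0‖)
    (hR : 2 * R ≤ ‖ω 0‖ ^ 2) : Real.log (‖ω 0‖ / 2) / 2 ≤ green0 ω := by
  rw [← orbitC_zero_one ω] at h4 hR ⊢
  refine ge_of_tendsto (tendsto_green0 hω (tendsto_norm_orbitC_atTop hω h4 hR)) ?_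
  filter_upwards [eventually_ge_atTop 1] with n hn
  obtain ⟨m, rfl⟩ := Nat.exists_eq_add_of_le hn
  have hpow := pow_two_pow_le_norm_orbitC_add hω h4 hR m
  have hlog := Real.log_le_log (by positivity) hpow
  rw [Real.log_pow] at hlog
  push_cast at hlog
  have hhalf : Real.log (‖orbitC ω 0 (1 + m)‖ / 2) ≤ Real.log ‖orbitC ω 0 (1 + m)‖ :=
    Real.log_le_log (hpow.trans_lt' (by positivity))
      (by linarith [norm_nonneg (orbitC ω 0 (1 + m))])
  rw [div_le_div_iff₀ two_pos (by positivity), pow_add]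
  linarith

theorem measurable_green0 : Measurable green0 := by
  have hlog : ∀ n, Measurable fun ω : ℕ → ℂ ↦ Real.log ‖orbitC ω 0 n‖ / 2 ^ n := fun n ↦
    (measurable_orbitC 0 n).norm.log.div_const _
  exact Measurable.ite (measurableSet_tendsto atTop fun n ↦ (measurable_orbitC 0 n).norm)
    (StronglyMeasurable.limUnder fun n ↦ (hlog n).stronglyMeasurable).measurable measurable_const

end Green

namespace IsProductOfUniform

variable {P : Measure (ℕ → ℂ)} {R : ℝ}

theorem measure_coord_mem (hP : IsProductOfUniform P R) (i : ℕ) {B : Set ℂ}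
    (hB : MeasurableSet B) :
    P {ω | ω i ∈ B} = (volume (ball (0 : ℂ) R))⁻¹ * volume (B ∩ ball (0 : ℂ) R) := by
  simpa using hP.2 {i} (fun _ ↦ B) fun _ ↦ hB

theorem ae_norm_le (hP : IsProductOfUniform P R) : ∀ᵐ ω ∂P, ∀ i, ‖ω i‖ ≤ R := by
  refine ae_all_iff.2 fun i ↦ ?_
  have hball : ∀ᵐ ω ∂P, ω i ∈ ball (0 : ℂ) R := by
    have h := hP.measure_coord_mem i (measurableSet_ball (x := (0 : ℂ)) (ε := R)).compl
    rw [Set.compl_inter_self, measure_empty, mul_zero] at h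
    exact ae_iff.2 h
  filter_upwards [hball] with ω hω
  exact (mem_ball_zero_iff.1 hω).le

theorem measureReal_norm_coord_le (hP : IsProductOfUniform P R) (hR : 0 < R) (i : ℕ) {r : ℝ}
    (hr : 0 ≤ r) : P.real {ω | ‖ω i‖ ≤ r} ≤ (r / R) ^ 2 := by
  have h := hP.measure_coord_mem i (measurableSet_closedBall (x := 0) (ε := r))
  simp only [mem_closedBall_zero_iff] at h
  refine ENNReal.toReal_le_of_le_ofReal (by positivity) ?_
  calc P {ω | ‖ω i‖ ≤ r}
      ≤ (volume (ball (0 : ℂ) R))⁻¹ * volume (closedBall (0 : ℂ) r) := by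
        rw [h]; gcongr; exact Set.inter_subset_left
    _ = ENNReal.ofReal ((r / R) ^ 2) := by
        rw [Complex.volume_ball, Complex.volume_closedBall, ← ENNReal.div_eq_inv_mul,
          ENNReal.mul_div_mul_right _ _ (by simp [NNReal.pi_ne_zero]) (by simp), div_pow,
          ENNReal.ofReal_div_of_pos (by positivity), ENNReal.ofReal_pow hr,
          ENNReal.ofReal_pow hR.le]

end IsProductOfUniform

section Integral

variable {P : Measure (ℕ → ℂ)} {R : ℝ}

theorem integrable_green0 (hP : IsProductOfUniform P R) (hR : 1 ≤ R) : Integrable green0 P := by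
  have := hP.1
  refine Integrable.of_bound measurable_green0.aestronglyMeasurable (Real.log (2 * R) / 2) ?_
  filter_upwards [hP.ae_norm_le] with ω hω
  rw [Real.norm_of_nonneg (green0_nonneg hω)]
  exact green0_le hR hω

theorem integral_green0_le (hP : IsProductOfUniform P R) (hR : 1 ≤ R) :
    ∫ ω, green0 ω ∂P ≤ Real.log (2 * R) / 2 := by
  have := hP.1
  calc ∫ ω, green0 ω ∂P ≤ ∫ _, Real.log (2 * R) / 2 ∂P :=
        integral_mono_ae (integrable_green0 hP hR) (integrable_const _)
          (hP.ae_norm_le.mono fun ω hω ↦ green0_le hR hω)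
    _ = Real.log (2 * R) / 2 := by simp

theorem le_integral_green0 (hP : IsProductOfUniform P R) (hR : 1 ≤ R) {δ : ℝ} (hδ : 0 < δ)
    (h4 : 4 ≤ δ * R) (h2 : 2 * R ≤ (δ * R) ^ 2) :
    (1 - δ ^ 2) * (Real.log (δ * R / 2) / 2) ≤ ∫ ω, green0 ω ∂P := by
  have := hP.1
  set c := Real.log (δ * R / 2) / 2
  set A := {ω : ℕ → ℂ | δ * R < ‖ω 0‖}
  have hA : MeasurableSet A := measurableSet_lt measurable_const (measurable_pi_apply 0).norm
  have hPA : 1 - δ ^ 2 ≤ P.real A := by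
    have hAc : Aᶜ = {ω | ‖ω 0‖ ≤ δ * R} := by ext; simp [A]
    have h := hP.measureReal_norm_coord_le (by linarith) 0 (by positivity : 0 ≤ δ * R)
    rw [← hAc, probReal_compl_eq_one_sub hA, mul_div_cancel_right₀ _ (by positivity)] at h
    linarith
  have hc : 0 ≤ c := div_nonneg (Real.log_nonneg (by linarith)) two_pos.le
  have hind : A.indicator (fun _ ↦ c) ≤ᵐ[P] green0 := by
    filter_upwards [hP.ae_norm_le] with ω hω
    by_cases hωA : ω ∈ A
    · have ha : δ * R < ‖ω 0‖ := hωA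
      rw [Set.indicator_of_mem hωA]
      refine le_trans ?_ (log_div_two_le_green0 hω (by linarith) (by nlinarith))
      show Real.log (δ * R / 2) / 2 ≤ _
      gcongr
    · rw [Set.indicator_of_notMem hωA]
      exact green0_nonneg hω
  calc (1 - δ ^ 2) * c ≤ P.real A * c := mul_le_mul_of_nonneg_right hPA hc
    _ = ∫ ω, A.indicator (fun _ ↦ c) ω ∂P := by rw [integral_indicator_const _ hA, smul_eq_mul]
    _ ≤ ∫ ω, green0 ω ∂P :=
        integral_mono_ae ((integrable_const _).indicator hA) (integrable_green0 hP hR) hind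

end Integral

theorem tendsto_log_mul_div_log {a : ℝ} (ha : 0 < a) :
    Tendsto (fun x ↦ Real.log (a * x) / Real.log x) atTop (𝓝 1) := by
  have h : Tendsto (fun x ↦ Real.log a / Real.log x + 1) atTop (𝓝 (0 + 1)) :=
    (tendsto_const_nhds.div_atTop Real.tendsto_log_atTop).add_const 1
  rw [zero_add] at h
  refine h.congr' ?_
  filter_upwards [eventually_gt_atTop 1] with x hx
  rw [Real.log_mul ha.ne' (by linarith), add_div, div_self (Real.log_pos hx).ne']

/-- With `ℙ_R` the infinite product of uniform distributions on `D(0,R)`, the global Green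
function `𝐠_R(0) = ∫ g_ω(0) dℙ_R(ω)` satisfies `lim_{R→∞} 𝐠_R(0) / ln R = 1/2`. -/
theorem stmt14 :
    ∀ ε : ℝ, 0 < ε → ∃ R1 : ℝ, ∀ R : ℝ, R ≥ R1 →
      ∀ P : Measure (ℕ → ℂ), IsProductOfUniform P R →
        |(∫ ω, green0 ω ∂P) / Real.log R - 1 / 2| < ε := by
  intro ε hε
  set δ := √ε
  have hδ : 0 < δ := Real.sqrt_pos.2 hε
  have hδε : δ ^ 2 = ε := Real.sq_sqrt hε.le
  have hupper : Tendsto (fun R ↦ 1 / 2 * (Real.log (2 * R) / Real.log R)) atTop (𝓝 (1 / 2)) := by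
    simpa only [mul_one] using (tendsto_log_mul_div_log two_pos).const_mul (1 / 2)
  have hlower : Tendsto (fun R ↦ (1 - δ ^ 2) / 2 * (Real.log (δ / 2 * R) / Real.log R)) atTop
      (𝓝 ((1 - δ ^ 2) / 2)) := by
    simpa only [mul_one] using (tendsto_log_mul_div_log (half_pos hδ)).const_mul ((1 - δ ^ 2) / 2)
  refine eventually_atTop.1 ?_
  filter_upwards [hupper.eventually (gt_mem_nhds (by linarith : 1 / 2 < 1 / 2 + ε)),
    hlower.eventually (lt_mem_nhds (by linarith : 1 / 2 - ε < (1 - δ ^ 2) / 2)),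
    Real.tendsto_log_atTop.eventually_gt_atTop 0, eventually_ge_atTop 1,
    eventually_ge_atTop (4 / δ), eventually_ge_atTop (2 / δ ^ 2)]
    with R hup hlow hlog hR1 hR4 hR2 P hP
  have h4 : 4 ≤ δ * R := by rwa [div_le_iff₀' hδ] at hR4
  have h2 : 2 * R ≤ (δ * R) ^ 2 := by rw [div_le_iff₀' (by positivity)] at hR2; nlinarith
  have hle := div_le_div_of_nonneg_right (integral_green0_le hP hR1) hlog.le
  have hge := div_le_div_of_nonneg_right (le_integral_green0 hP hR1 hδ h4 h2) hlog.le
  rw [show Real.log (2 * R) / 2 / Real.log R = 1 / 2 * (Real.log (2 * R) / Real.log R) by ring]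
    at hle
  rw [show (1 - δ ^ 2) * (Real.log (δ * R / 2) / 2) / Real.log R
      = (1 - δ ^ 2) / 2 * (Real.log (δ / 2 * R) / Real.log R) by rw [mul_div_right_comm δ]; ring]
    at hge
  rw [abs_sub_lt_iff]
  constructor <;> linarith
end

section
/- Let c_0 ∉ M and δ_0 small as above. For each fixed ω = (v_0, v_1, ...) ∈ D(0,1)^ℕ, the function λ ↦ g_{λ,ω}(0), defined as the limit of (1/2^n) ln|f^n_{λ,ω}(0)| with parameters c_n = c_0 + λ v_n, is harmonic on the disk D(0, δ_0). The limit is locally uniform in λ, each term λ ↦ (1/2^n) ln|f^n_{λ,ω}(0)| being harmonic for n large. -/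
open Metric Complex Filter

/-- The Mandelbrot set: parameters `c` for which the orbit of `0` under `z ↦ z^2 + c`
is bounded. -/
def mandelbrot : Set ℂ :=
  {c | Bornology.IsBounded (Set.range fun n => orbitC (fun _ => c) 0 n)}


/-!
For `|λ| < δ₀` all parameters `c_n = c₀ + λ v_n` lie in the disk `|c| ≤ A := |c₀| + 1`. Since
`c₀ ∉ M`, the unperturbed orbit of `0` passes the escape radius `A + 4` at some time `N`, and an
estimate of the first `N` steps that is uniform in `ω` shows that for small `δ₀` every perturbed
orbit passes it too. Beyond the escape radius `z_{n+1} = z_n² (1 + c_n / z_n²)` with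
`|c_n / z_n²| ≤ 1/2`, so a holomorphic branch of `log z_n / 2ⁿ` is obtained by adding the principal
logarithms `Log (1 + c_n / z_n²) / 2ⁿ⁺¹` to a branch of `log z_N / 2ᴺ`. These increments are
`O(2⁻ⁿ)` uniformly in `λ`, so the branches converge uniformly to a holomorphic function whose real
part is the Green function.
-/

open Topology

theorem orbitC_succ (ω : ℕ → ℂ) (z : ℂ) (n : ℕ) :
    orbitC ω z (n + 1) = orbitC ω z n ^ 2 + ω n := rfl

theorem exists_lt_norm_orbitC_of_notMem_mandelbrot {c : ℂ} (hc : c ∉ mandelbrot) (R : ℝ) :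
    ∃ N, R < ‖orbitC (fun _ => c) 0 N‖ := by
  by_contra! h
  exact hc (isBounded_iff_forall_norm_le.2 ⟨R, Set.forall_mem_range.2 h⟩ : Bornology.IsBounded _)

theorem differentiableOn_orbitC {ω : ℂ → ℕ → ℂ} {U : Set ℂ}
    (hω : ∀ k, DifferentiableOn ℂ (fun t => ω t k) U) (z : ℂ) (n : ℕ) :
    DifferentiableOn ℂ (fun t => orbitC (ω t) z n) U := by
  induction n with
  | zero => exact differentiableOn_const z
  | succ n ih => exact (ih.pow 2).add (hω n)

theorem re_div_two_pow (x : ℂ) (n : ℕ) : (x / 2 ^ n).re = x.re / 2 ^ n := by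
  exact_mod_cast div_ofReal_re x (2 ^ n)

section Escape

variable {A : ℝ} {c z : ℂ}

theorem norm_div_sq_le_half (hc : ‖c‖ ≤ A) (hz : A + 4 ≤ ‖z‖) : ‖c / z ^ 2‖ ≤ 1 / 2 := by
  have hA : 0 ≤ A := (norm_nonneg c).trans hc
  rw [norm_div, norm_pow, div_le_iff₀ (by nlinarith)]
  nlinarith

theorem two_mul_norm_le_norm_sq_add (hc : ‖c‖ ≤ A) (hz : A + 4 ≤ ‖z‖) :
    2 * ‖z‖ ≤ ‖z ^ 2 + c‖ := by
  have hA : 0 ≤ A := (norm_nonneg c).trans hc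
  have h := norm_sub_norm_le (z ^ 2) (-c)
  rw [norm_pow, norm_neg, sub_neg_eq_add] at h
  nlinarith

theorem log_norm_sq_add (hz : z ≠ 0) (h : z ^ 2 + c ≠ 0) :
    Real.log ‖z ^ 2 + c‖ = 2 * Real.log ‖z‖ + Real.log ‖1 + c / z ^ 2‖ := by
  have hz2 : z ^ 2 ≠ 0 := pow_ne_zero 2 hz
  have hfactor : z ^ 2 + c = z ^ 2 * (1 + c / z ^ 2) := by field_simp
  have hw : 1 + c / z ^ 2 ≠ 0 := by
    rintro hw
    rw [hw, mul_zero] at hfactor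
    exact h hfactor
  rw [hfactor, norm_mul, Real.log_mul (norm_ne_zero_iff.2 hz2) (norm_ne_zero_iff.2 hw), norm_pow,
    Real.log_pow]
  push_cast
  ring

variable {ω : ℕ → ℂ} {N : ℕ}

theorem two_pow_mul_le_norm_orbitC (hω : ∀ k, ‖ω k‖ ≤ A) (hN : A + 4 ≤ ‖orbitC ω z N‖)
    (j : ℕ) : 2 ^ j * ‖orbitC ω z N‖ ≤ ‖orbitC ω z (N + j)‖ := by
  induction j with
  | zero => simp
  | succ j ih =>
    have hj : A + 4 ≤ ‖orbitC ω z (N + j)‖ :=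
      hN.trans ((le_mul_of_one_le_left (norm_nonneg _) (one_le_pow₀ one_le_two)).trans ih)
    calc 2 ^ (j + 1) * ‖orbitC ω z N‖ = 2 * (2 ^ j * ‖orbitC ω z N‖) := by ring
      _ ≤ 2 * ‖orbitC ω z (N + j)‖ := by gcongr
      _ ≤ ‖orbitC ω z (N + (j + 1))‖ := two_mul_norm_le_norm_sq_add (hω _) hj

theorem le_norm_orbitC (hω : ∀ k, ‖ω k‖ ≤ A) (hN : A + 4 ≤ ‖orbitC ω z N‖) {n : ℕ}
    (hn : N ≤ n) : A + 4 ≤ ‖orbitC ω z n‖ := by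
  obtain ⟨j, rfl⟩ := Nat.exists_eq_add_of_le hn
  exact hN.trans ((le_mul_of_one_le_left (norm_nonneg _) (one_le_pow₀ one_le_two)).trans
    (two_pow_mul_le_norm_orbitC hω hN j))

theorem orbitC_ne_zero (hω : ∀ k, ‖ω k‖ ≤ A) (hN : A + 4 ≤ ‖orbitC ω z N‖) {n : ℕ}
    (hn : N ≤ n) : orbitC ω z n ≠ 0 := by
  have hA : 0 ≤ A := (norm_nonneg _).trans (hω 0)
  have h := le_norm_orbitC hω hN hn
  exact norm_pos_iff.1 (by linarith)

theorem tendsto_norm_orbitC_atTop_s16 (hω : ∀ k, ‖ω k‖ ≤ A) (hN : A + 4 ≤ ‖orbitC ω z N‖) :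
    Tendsto (fun n => ‖orbitC ω z n‖) atTop atTop := by
  rw [← tendsto_add_atTop_iff_nat N]
  have hpos : 0 < ‖orbitC ω z N‖ := norm_pos_iff.2 (orbitC_ne_zero hω hN le_rfl)
  refine tendsto_atTop_mono (fun j => ?_)
    ((tendsto_pow_atTop_atTop_of_one_lt one_lt_two).atTop_mul_const hpos)
  rw [add_comm]
  exact two_pow_mul_le_norm_orbitC hω hN j

end Escape

theorem norm_orbitC_sub_le {ω ω' : ℕ → ℂ} {z : ℂ} {M ε : ℝ} {N : ℕ}
    (hM : ∀ k < N, ‖orbitC ω' z k‖ + 1 ≤ M) (hε : ∀ k, ‖ω k - ω' k‖ ≤ ε)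
    (hN : (2 * M + 1) ^ N * ε ≤ 1) :
    ∀ k ≤ N, ‖orbitC ω z k - orbitC ω' z k‖ ≤ (2 * M + 1) ^ k * ε := by
  have hε0 : 0 ≤ ε := (norm_nonneg _).trans (hε 0)
  intro k
  induction k with
  | zero => simpa [orbitC] using hε0
  | succ k ih =>
    intro hk
    have hkN : k < N := hk
    have hM1 : 1 ≤ M := by linarith [hM k hkN, norm_nonneg (orbitC ω' z k)]
    have hK : 1 ≤ 2 * M + 1 := by linarith
    set d := orbitC ω z k - orbitC ω' z k
    have hd := ih hkN.le
    have hd1 : ‖d‖ ≤ 1 := hd.trans <| le_trans (by gcongr) hN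
    have hsum : ‖orbitC ω z k + orbitC ω' z k‖ ≤ 2 * M := by
      have h := norm_add_le d (2 * orbitC ω' z k)
      rw [norm_mul, Complex.norm_ofNat] at h
      calc ‖orbitC ω z k + orbitC ω' z k‖ = ‖d + 2 * orbitC ω' z k‖ := by
            congr 1; simp only [d]; ring
        _ ≤ 2 * M := by linarith [hM k hkN]
    have hε' : ε ≤ (2 * M + 1) ^ k * ε := le_mul_of_one_le_left hε0 (one_le_pow₀ hK)
    calc ‖orbitC ω z (k + 1) - orbitC ω' z (k + 1)‖
        = ‖d * (orbitC ω z k + orbitC ω' z k) + (ω k - ω' k)‖ := by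
          simp only [orbitC_succ, d]; ring_nf
      _ ≤ ‖d‖ * (2 * M) + ε := by
          grw [norm_add_le, norm_mul, hsum, hε k]
      _ ≤ (2 * M + 1) ^ k * ε * (2 * M) + (2 * M + 1) ^ k * ε := by gcongr
      _ = (2 * M + 1) ^ (k + 1) * ε := by ring

theorem exists_pos_forall_norm_orbitC_sub_le_one (ω' : ℕ → ℂ) (z : ℂ) (N : ℕ) :
    ∃ δ > 0, ∀ ω : ℕ → ℂ, (∀ k, ‖ω k - ω' k‖ ≤ δ) → ‖orbitC ω z N - orbitC ω' z N‖ ≤ 1 := by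
  set M := ∑ k ∈ Finset.range N, ‖orbitC ω' z k‖ + 1 with hM
  have hbound : ∀ k < N, ‖orbitC ω' z k‖ + 1 ≤ M := fun k hk => by
    grw [Finset.single_le_sum (fun i _ => norm_nonneg _) (Finset.mem_range.2 hk)]
  have hK : 0 < (2 * M + 1) ^ N := by rw [hM]; positivity
  have hKδ : (2 * M + 1) ^ N * (1 / (2 * M + 1) ^ N) = 1 := mul_one_div_cancel hK.ne'
  exact ⟨1 / (2 * M + 1) ^ N, by positivity, fun ω hω =>
    (norm_orbitC_sub_le hbound hω hKδ.le N le_rfl).trans_eq hKδ⟩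

theorem exists_differentiableOn_re_eq_log_norm {U : Set ℂ} {f : ℂ → ℂ} {b : ℂ}
    (hf : DifferentiableOn ℂ f U) (hfb : ∀ t ∈ U, ‖f t - b‖ < ‖b‖) :
    ∃ L : ℂ → ℂ, DifferentiableOn ℂ L U ∧ ∀ t ∈ U, (L t).re = Real.log ‖f t‖ := by
  have hb : ∀ t ∈ U, b ≠ 0 := fun t ht => norm_pos_iff.1 ((norm_nonneg _).trans_lt (hfb t ht))
  have hquot : ∀ t ∈ U, f t / b = 1 + (f t - b) / b := fun t ht => by
    field_simp [hb t ht]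
    ring
  refine ⟨fun t => Real.log ‖b‖ + log (f t / b), ?_, fun t ht => ?_⟩
  · refine ((hf.div_const b).clog fun t ht => ?_).const_add _
    rw [hquot t ht]
    refine mem_slitPlane_of_norm_lt_one ?_
    rw [norm_div, div_lt_one (norm_pos_iff.2 (hb t ht))]
    exact hfb t ht
  · have hft : f t ≠ 0 := by
      rintro h
      simpa [h] using hfb t ht
    rw [add_re, ofReal_re, log_re, norm_div,
      Real.log_div (norm_ne_zero_iff.2 hft) (norm_ne_zero_iff.2 (hb t ht))]
    ring

theorem exists_tendstoUniformlyOn_of_norm_sub_le {α E : Type*} [NormedAddCommGroup E]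
    [CompleteSpace E] {f : ℕ → α → E} {s : Set α} {u : ℕ → ℝ} (hu : Summable u)
    (hf : ∀ᶠ n in atTop, ∀ x ∈ s, ‖f (n + 1) x - f n x‖ ≤ u n) :
    ∃ g : α → E, TendstoUniformlyOn f g atTop s := by
  have hS := Metric.tendstoUniformlyOn_iff.1 (tendstoUniformlyOn_tsum_nat_eventually hu hf)
  refine ⟨fun x => f 0 x + ∑' n, (f (n + 1) x - f n x), Metric.tendstoUniformlyOn_iff.2 ?_⟩
  intro ε hε
  filter_upwards [hS ε hε] with n hn x hx
  have htel := Finset.sum_range_sub (fun k => f k x) n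
  rw [← add_sub_cancel (f 0 x) (f n x), ← htel, dist_add_left]
  exact hn x hx

section HolomorphicFamily

variable {U : Set ℂ} {ω : ℂ → ℕ → ℂ} {A : ℝ} {z : ℂ} {N : ℕ} {L : ℂ → ℂ}

/-- A holomorphic branch of `log z_n / 2ⁿ` for `n ≥ N`, built from a branch `L` of `log z_N`. -/
noncomputable def greenLift (ω : ℂ → ℕ → ℂ) (z : ℂ) (N : ℕ) (L : ℂ → ℂ) (n : ℕ) (t : ℂ) : ℂ :=
  L t / 2 ^ N + ∑ k ∈ Finset.Ico N n, log (1 + ω t k / orbitC (ω t) z k ^ 2) / 2 ^ (k + 1)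

theorem greenLift_succ {n : ℕ} (hn : N ≤ n) (t : ℂ) :
    greenLift ω z N L (n + 1) t =
      greenLift ω z N L n t + log (1 + ω t n / orbitC (ω t) z n ^ 2) / 2 ^ (n + 1) := by
  rw [greenLift, greenLift, Finset.sum_Ico_succ_top hn, add_assoc]

theorem re_greenLift {t : ℂ} (hA : ∀ k, ‖ω t k‖ ≤ A) (hN : A + 4 ≤ ‖orbitC (ω t) z N‖)
    (hL : (L t).re = Real.log ‖orbitC (ω t) z N‖) {n : ℕ} (hn : N ≤ n) :
    (greenLift ω z N L n t).re = Real.log ‖orbitC (ω t) z n‖ / 2 ^ n := by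
  induction n, hn using Nat.le_induction with
  | base => simp [greenLift, re_div_two_pow, hL]
  | succ n hn ih =>
    rw [greenLift_succ hn, add_re, ih, re_div_two_pow, log_re, orbitC_succ,
      log_norm_sq_add (orbitC_ne_zero hA hN hn) (orbitC_ne_zero hA hN (hn.trans n.le_succ))]
    field_simp
    ring

theorem norm_greenLift_succ_sub_le {t : ℂ} (hA : ∀ k, ‖ω t k‖ ≤ A)
    (hN : A + 4 ≤ ‖orbitC (ω t) z N‖) {n : ℕ} (hn : N ≤ n) :
    ‖greenLift ω z N L (n + 1) t - greenLift ω z N L n t‖ ≤ (1 / 2) ^ n := by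
  have hsmall := norm_div_sq_le_half (hA n) (le_norm_orbitC hA hN hn)
  rw [greenLift_succ hn, add_sub_cancel_left, norm_div, norm_pow, Complex.norm_ofNat,
    div_le_iff₀ (by positivity)]
  calc ‖log (1 + ω t n / orbitC (ω t) z n ^ 2)‖ ≤ 3 / 2 * (1 / 2) :=
        (norm_log_one_add_half_le_self hsmall).trans (by gcongr)
    _ ≤ (1 / 2) ^ n * 2 ^ (n + 1) := by
        rw [pow_succ, ← mul_assoc, ← mul_pow]
        norm_num

theorem differentiableOn_greenLift (hω : ∀ k, DifferentiableOn ℂ (fun t => ω t k) U)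
    (hA : ∀ t ∈ U, ∀ k, ‖ω t k‖ ≤ A) (hN : ∀ t ∈ U, A + 4 ≤ ‖orbitC (ω t) z N‖)
    (hL : DifferentiableOn ℂ L U) (n : ℕ) : DifferentiableOn ℂ (greenLift ω z N L n) U := by
  refine (hL.div_const _).add (DifferentiableOn.fun_sum fun k hk => ?_)
  have hk : N ≤ k := (Finset.mem_Ico.1 hk).1
  refine DifferentiableOn.div_const (DifferentiableOn.clog ?_ fun t ht => ?_) _
  · exact (differentiableOn_const 1).add ((hω k).div ((differentiableOn_orbitC hω z k).pow 2)
      fun t ht => pow_ne_zero 2 (orbitC_ne_zero (hA t ht) (hN t ht) hk))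
  · refine mem_slitPlane_of_norm_lt_one ((norm_div_sq_le_half (hA t ht k) ?_).trans_lt ?_)
    · exact le_norm_orbitC (hA t ht) (hN t ht) hk
    · norm_num

theorem exists_differentiableOn_tendstoUniformlyOn_log_norm_orbitC (hU : IsOpen U)
    (hω : ∀ k, DifferentiableOn ℂ (fun t => ω t k) U) (hA : ∀ t ∈ U, ∀ k, ‖ω t k‖ ≤ A)
    (hN : ∀ t ∈ U, A + 4 ≤ ‖orbitC (ω t) z N‖) (hL : DifferentiableOn ℂ L U)
    (hLre : ∀ t ∈ U, (L t).re = Real.log ‖orbitC (ω t) z N‖) :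
    ∃ F : ℂ → ℂ, DifferentiableOn ℂ F U ∧
      TendstoUniformlyOn (fun n t => Real.log ‖orbitC (ω t) z n‖ / 2 ^ n) (fun t => (F t).re)
        atTop U := by
  obtain ⟨F, hF⟩ := exists_tendstoUniformlyOn_of_norm_sub_le summable_geometric_two
    (eventually_atTop.2 ⟨N, fun n hn t ht =>
      norm_greenLift_succ_sub_le (L := L) (hA t ht) (hN t ht) hn⟩)
  refine ⟨F, hF.tendstoLocallyUniformlyOn.differentiableOn
    (Eventually.of_forall (differentiableOn_greenLift hω hA hN hL)) hU, ?_⟩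
  refine (reCLM.uniformContinuous.comp_tendstoUniformlyOn hF).congr ?_
  filter_upwards [eventually_ge_atTop N] with n hn t ht
  exact re_greenLift (hA t ht) (hN t ht) (hLre t ht) hn

end HolomorphicFamily

theorem green0_eq_of_tendsto {ω : ℕ → ℂ} {g : ℝ}
    (hesc : Tendsto (fun n => ‖orbitC ω 0 n‖) atTop atTop)
    (hg : Tendsto (fun n : ℕ => Real.log ‖orbitC ω 0 n‖ / 2 ^ n) atTop (𝓝 g)) :
    green0 ω = g := by
  rw [green0, if_pos hesc]
  exact hg.limUnder_eq

/-- Let `c_0 ∉ M`.  Then for `δ_0` small enough, for each fixed `ω = (v_0, v_1, ...) ∈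
D(0,1)^ℕ`: the critical point `0` escapes for every `λ ∈ D(0,δ_0)` (parameters
`c_n = c_0 + λ v_n`); the functions `λ ↦ 2^{-n} ln |f^n_{λ,ω}(0)|` converge locally
uniformly on `D(0,δ_0)` to `λ ↦ g_{λ,ω}(0)`; and the limit `λ ↦ g_{λ,ω}(0)` is harmonic on
`D(0,δ_0)` — being harmonic on a disk, it is the real part of a holomorphic function. -/
theorem stmt16 (c0 : ℂ) (hc0 : c0 ∉ mandelbrot) :
    ∃ δ0 : ℝ, 0 < δ0 ∧
      ∀ v : ℕ → ℂ, (∀ n, ‖v n‖ < 1) →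
        (∀ lam ∈ ball (0 : ℂ) δ0,
          Tendsto (fun n => ‖orbitC (fun k => c0 + lam * v k) 0 n‖)
            atTop atTop) ∧
        TendstoLocallyUniformlyOn
          (fun (n : ℕ) (lam : ℂ) =>
            Real.log (‖orbitC (fun k => c0 + lam * v k) 0 n‖) / 2 ^ n)
          (fun lam => green0 (fun k => c0 + lam * v k)) atTop (ball (0 : ℂ) δ0) ∧
        ∃ F : ℂ → ℂ, DifferentiableOn ℂ F (ball (0 : ℂ) δ0) ∧
          ∀ lam ∈ ball (0 : ℂ) δ0,
            green0 (fun k => c0 + lam * v k) = (F lam).re := by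
  obtain ⟨N, hN⟩ := exists_lt_norm_orbitC_of_notMem_mandelbrot hc0 (‖c0‖ + 6)
  obtain ⟨δ, hδ, hδN⟩ := exists_pos_forall_norm_orbitC_sub_le_one (fun _ => c0) 0 N
  refine ⟨min δ 1, by positivity, fun v hv => ?_⟩
  set ω := fun t k => c0 + t * v k
  have hsmall : ∀ t ∈ ball (0 : ℂ) (min δ 1), ∀ k, ‖ω t k - c0‖ ≤ min δ 1 := fun t ht k => by
    rw [add_sub_cancel_left, norm_mul]
    exact (mul_le_of_le_one_right (norm_nonneg t) (hv k).le).trans (mem_ball_zero_iff.1 ht).le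
  have hA : ∀ t ∈ ball (0 : ℂ) (min δ 1), ∀ k, ‖ω t k‖ ≤ ‖c0‖ + 1 := fun t ht k => by
    linarith [norm_sub_norm_le (ω t k) c0, hsmall t ht k, min_le_right δ 1]
  have hclose t (ht : t ∈ ball (0 : ℂ) (min δ 1)) :=
    hδN (ω t) fun k => (hsmall t ht k).trans (min_le_left δ 1)
  have hescN : ∀ t ∈ ball (0 : ℂ) (min δ 1), ‖c0‖ + 1 + 4 ≤ ‖orbitC (ω t) 0 N‖ := fun t ht => by
    linarith [norm_sub_norm_le (orbitC (fun _ => c0) 0 N) (orbitC (ω t) 0 N),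
      norm_sub_rev (orbitC (fun _ => c0) 0 N) (orbitC (ω t) 0 N), hclose t ht]
  obtain ⟨L, hL, hLre⟩ := exists_differentiableOn_re_eq_log_norm
    (differentiableOn_orbitC (fun k => by fun_prop) 0 N)
    (fun t ht => (hclose t ht).trans_lt (by linarith [norm_nonneg c0]))
  obtain ⟨F, hF, hconv⟩ := exists_differentiableOn_tendstoUniformlyOn_log_norm_orbitC isOpen_ball
    (fun k => by fun_prop) hA hescN hL hLre
  have hesc t (ht : t ∈ ball (0 : ℂ) (min δ 1)) :=
    tendsto_norm_orbitC_atTop_s16 (hA t ht) (hescN t ht)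
  have hgreen : ∀ t ∈ ball (0 : ℂ) (min δ 1), green0 (ω t) = (F t).re :=
    fun t ht => green0_eq_of_tendsto (hesc t ht) (hconv.tendsto_at ht)
  exact ⟨hesc, hconv.tendstoLocallyUniformlyOn.congr_right fun t ht => (hgreen t ht).symm,
    F, hF, hgreen⟩
end

section
/- Let f^k : S → S' be a proper holomorphic branched covering of degree d ≥ 1 between topological disks, and let μ, μ' be nonatomic Borel measures such that μ'(f^k(E)) = 2^k μ(E) whenever f^k is injective on E. Then μ'(S') ≤ 2^k μ(S). -/
open MeasureTheory Set

open Filter Topology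

/-! Around a non-critical point `f` is injective, so `S` minus the critical set is covered by
countably many open sets on which `f` is injective; disjointifying them and applying the
comparison hypothesis piece by piece bounds `μ'` of their image by `2 ^ k * μ S`. The critical
values form a countable, hence `μ'`-null, set: near each critical point `f` is either constant
or the critical point is isolated. -/

theorem countable_image_of_forall_eventually_eq {X Y : Type*} [TopologicalSpace X]
    [SecondCountableTopology X] {f : X → Y} {s : Set X}
    (h : ∀ x ∈ s, ∀ᶠ y in 𝓝[s] x, f y = f x) : (f '' s).Countable := by
  obtain ⟨t, -, htc, hst⟩ := TopologicalSpace.countable_cover_nhdsWithin h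
  refine (htc.image f).mono ?_
  rintro _ ⟨y, hy, rfl⟩
  obtain ⟨x, hx, hyx⟩ := mem_iUnion₂.1 (hst hy)
  exact ⟨x, hx, hyx.symm⟩

theorem exists_seq_isOpen_injOn_cover {X Y : Type*} [TopologicalSpace X]
    [SecondCountableTopology X] {f : X → Y} {s : Set X}
    (h : ∀ x ∈ s, ∃ U ∈ 𝓝 x, InjOn f U) :
    ∃ g : ℕ → Set X, (∀ n, IsOpen (g n)) ∧ (∀ n, InjOn f (g n)) ∧ s ⊆ ⋃ n, g n := by
  choose! U hU hUinj using h
  obtain ⟨t, hts, htc, hst⟩ := TopologicalSpace.countable_cover_nhdsWithin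
    (f := fun x => interior (U x)) fun x hx =>
      mem_nhdsWithin_of_mem_nhds (interior_mem_nhds.2 (hU x hx))
  have hc := htc.image fun x => interior (U x)
  have hgood : ∀ V ∈ insert ∅ ((fun x => interior (U x)) '' t), IsOpen V ∧ InjOn f V := by
    simp only [forall_mem_insert, forall_mem_image]
    exact ⟨⟨isOpen_empty, injOn_empty f⟩,
      fun x hx => ⟨isOpen_interior, (hUinj x (hts hx)).mono interior_subset⟩⟩
  have hg n := hgood _ (range_enumerateCountable_subset hc ∅ (mem_range_self n))
  refine ⟨enumerateCountable hc ∅, fun n => (hg n).1, fun n => (hg n).2, fun y hy => ?_⟩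
  obtain ⟨x, hx, hyx⟩ := mem_iUnion₂.1 (hst hy)
  obtain ⟨n, hn⟩ := subset_range_enumerate hc ∅ (mem_image_of_mem _ hx)
  exact mem_iUnion.2 ⟨n, hn ▸ hyx⟩

theorem measure_image_le_of_injOn_cover {X Y : Type*} [MeasurableSpace X] [MeasurableSpace Y]
    {μ : Measure X} {ν : Measure Y} {c : ENNReal} {f : X → Y} {s : Set X} {g : ℕ → Set X}
    (hs : MeasurableSet s) (hg : ∀ n, MeasurableSet (g n)) (hinj : ∀ n, InjOn f (g n))
    (hcover : s ⊆ ⋃ n, g n)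
    (hcomp : ∀ E ⊆ s, MeasurableSet E → InjOn f E → ν (f '' E) = c * μ E) :
    ν (f '' s) ≤ c * μ s := by
  set F : ℕ → Set X := fun n => s ∩ disjointed g n
  have hF : ⋃ n, F n = s := by rw [← inter_iUnion, iUnion_disjointed, inter_eq_left.2 hcover]
  have hFmeas : ∀ n, MeasurableSet (F n) := fun n => hs.inter (MeasurableSet.disjointed hg n)
  have hFdisj : Pairwise (Function.onFun Disjoint F) := fun m n hmn =>
    ((disjoint_disjointed g hmn).mono inter_subset_right inter_subset_right)
  calc ν (f '' s) = ν (⋃ n, f '' F n) := by rw [← image_iUnion, hF]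
    _ ≤ ∑' n, ν (f '' F n) := measure_iUnion_le _
    _ = ∑' n, c * μ (F n) := tsum_congr fun n => hcomp _ inter_subset_left (hFmeas n)
        ((hinj n).mono (inter_subset_right.trans (disjointed_subset g n)))
    _ = c * μ s := by rw [ENNReal.tsum_mul_left, ← measure_iUnion hFdisj hFmeas, hF]

theorem HasStrictDerivAt.exists_mem_nhds_injOn {𝕜 : Type*} [NontriviallyNormedField 𝕜]
    [CompleteSpace 𝕜] {f : 𝕜 → 𝕜} {f' a : 𝕜} (hf : HasStrictDerivAt f f' a)
    (hf' : f' ≠ 0) : ∃ U ∈ 𝓝 a, InjOn f U :=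
  ⟨_, hf.eventually_left_inverse hf', fun _ hx _ hy hxy => hx.symm.trans (hxy ▸ hy)⟩

theorem eventually_eq_of_deriv_eventuallyEq_zero {𝕜 E : Type*} [RCLike 𝕜]
    [NormedAddCommGroup E] [NormedSpace 𝕜 E] {f : 𝕜 → E} {z : 𝕜}
    (hf : ∀ᶠ x in 𝓝 z, DifferentiableAt 𝕜 f x) (h : deriv f =ᶠ[𝓝 z] 0) :
    ∀ᶠ x in 𝓝 z, f x = f z := by
  obtain ⟨r, hr, hball⟩ := Metric.eventually_nhds_iff_ball.1 (hf.and h)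
  filter_upwards [Metric.ball_mem_nhds z hr] with x hx
  exact Metric.isOpen_ball.is_const_of_deriv_eq_zero (convex_ball z r).isPreconnected
    (fun y hy => (hball y hy).1.differentiableWithinAt) (fun y hy => (hball y hy).2) hx
    (Metric.mem_ball_self hr)

theorem AnalyticAt.eventually_nhdsWithin_setOf_deriv_eq_zero {𝕜 E : Type*} [RCLike 𝕜]
    [NormedAddCommGroup E] [NormedSpace 𝕜 E] [CompleteSpace E] {f : 𝕜 → E} {z : 𝕜}
    (hf : AnalyticAt 𝕜 f z) : ∀ᶠ x in 𝓝[{x | deriv f x = 0}] z, f x = f z := by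
  rcases hf.deriv.eventually_eq_zero_or_eventually_ne_zero with h | h
  · exact nhdsWithin_le_nhds <| eventually_eq_of_deriv_eventuallyEq_zero
      (hf.eventually_analyticAt.mono fun x hx => hx.differentiableAt) h
  · filter_upwards [nhdsWithin_le_nhds (eventually_nhdsWithin_iff.1 h), self_mem_nhdsWithin]
      with x hne hx
    obtain rfl : x = z := by_contra fun hxz => hne hxz hx
    rfl

theorem AnalyticOnNhd.countable_image_setOf_deriv_eq_zero {𝕜 E : Type*} [RCLike 𝕜]
    [NormedAddCommGroup E] [NormedSpace 𝕜 E] [CompleteSpace E] {f : 𝕜 → E} {s : Set 𝕜}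
    (hf : AnalyticOnNhd 𝕜 f s) : (f '' {z ∈ s | deriv f z = 0}).Countable :=
  countable_image_of_forall_eventually_eq fun z hz =>
    nhdsWithin_mono z (fun _ hx => hx.2) (hf z hz.1).eventually_nhdsWithin_setOf_deriv_eq_zero

theorem stmt19_general (k : ℕ) (S S' : Set ℂ)
    (hS : IsOpen S)
    (f : ℂ → ℂ) (hf : DifferentiableOn ℂ f S)
    (hsurj : f '' S = S')
    (μ μ' : Measure ℂ) [NullSingletonClass μ']
    (hcomp : ∀ E : Set ℂ, E ⊆ S → MeasurableSet E → Set.InjOn f E →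
      μ' (f '' E) = 2 ^ k * μ E) :
    μ' S' ≤ 2 ^ k * μ S := by
  have hA : AnalyticOnNhd ℂ f S := hf.analyticOnNhd hS
  set Z := {z ∈ S | deriv f z = 0}
  have hZ : μ' (f '' Z) = 0 := hA.countable_image_setOf_deriv_eq_zero.measure_zero μ'
  obtain ⟨g, hg_open, hg_inj, hcover⟩ := exists_seq_isOpen_injOn_cover (s := S \ Z)
    fun z hz => (hA z hz.1).hasStrictDerivAt.exists_mem_nhds_injOn fun h => hz.2 ⟨hz.1, h⟩
  have hSZ : MeasurableSet (S \ Z) := hS.measurableSet.diff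
    (hS.measurableSet.inter (measurable_deriv f (measurableSet_singleton 0)))
  calc μ' S' = μ' (f '' Z ∪ f '' (S \ Z)) := by
        rw [← hsurj, ← image_union, union_sdiff_cancel fun _ hz => hz.1]
    _ ≤ μ' (f '' Z) + μ' (f '' (S \ Z)) := measure_union_le _ _
    _ = μ' (f '' (S \ Z)) := by rw [hZ, zero_add]
    _ ≤ 2 ^ k * μ (S \ Z) :=
        measure_image_le_of_injOn_cover hSZ (fun n => (hg_open n).measurableSet) hg_inj hcover
          fun E hE => hcomp E (hE.trans sdiff_subset)
    _ ≤ 2 ^ k * μ S := by gcongr; exact sdiff_subset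

/-- Let `f^k : S → S'` be a proper holomorphic branched covering of degree `d ≥ 1` between
topological disks (open, connected, simply connected plane domains), and let `μ, μ'` be
finite nonatomic Borel measures such that `μ'(f^k(E)) = 2^k μ(E)` whenever `f^k` is
injective on the (measurable) set `E ⊆ S`.  Then `μ'(S') ≤ 2^k μ(S)`. -/
theorem stmt19 (k d : ℕ) (hd : 1 ≤ d) (S S' : Set ℂ)
    (hS : IsOpen S) (hS' : IsOpen S')
    (hScon : IsConnected S) (hS'con : IsConnected S')
    (hSsc : SimplyConnectedSpace S) (hS'sc : SimplyConnectedSpace S')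
    (f : ℂ → ℂ) (hf : DifferentiableOn ℂ f S)
    (hsurj : f '' S = S')
    (hproper : ∀ Kc : Set ℂ, Kc ⊆ S' → IsCompact Kc → IsCompact (S ∩ f ⁻¹' Kc))
    (hdeg : ∀ w ∈ S', ({z ∈ S | f z = w}).Finite ∧ ({z ∈ S | f z = w}).ncard ≤ d)
    (μ μ' : Measure ℂ) [IsFiniteMeasure μ] [IsFiniteMeasure μ'] [NullSingletonClass μ']
    (hcomp : ∀ E : Set ℂ, E ⊆ S → MeasurableSet E → Set.InjOn f E →
      μ' (f '' E) = 2 ^ k * μ E) :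
    μ' S' ≤ 2 ^ k * μ S :=
  stmt19_general k S S' hS f hf hsurj μ μ' hcomp
end
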